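/- arXiv:math/0509144 — 2 statements merged into one kernel-verified Lean document; each statement's English description precedes it below -/
import Mathlib

section
/- Fix R > 0. There exists a natural number N such that for all d > N the following holds: set q = 2^d + 1 and suppose ρ' = (1/((2d)·2^d))^{1/(2^d+1)} · ρ with ρ' ≥ R. Then for any power series f on ℂⁿ of order ≥ q with |f|_ρ < ∞, each partial derivative ∂f/∂x_j satisfies |∂f/∂x_j|_{ρ'} ≤ |f|_ρ. -/
open Real

/-- Key real inequality: for `0 < c ≤ 1/4` and `q ≤ k`, `k c^{k/q} ≤ q c`. -/
lemma aux_lemA {c q k : ℝ} (hc : 0 < c) (hc4 : c ≤ 1/4) (hq : 0 < q) (hk : q ≤ k) :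
    k * c ^ (k / q) ≤ q * c := by
  set x := k / q - 1 with hx
  have hx0 : 0 ≤ x := by
    have h1 : 1 ≤ k / q := (one_le_div hq).mpr hk
    simp [hx]; linarith
  have hkq : k = q * (1 + x) := by
    have : k / q = 1 + x := by rw [hx]; ring
    field_simp at this; linarith [this]
  have hcx : c ^ (k / q) = c * c ^ x := by
    rw [show k / q = 1 + x by rw [hx]; ring, Real.rpow_add hc, Real.rpow_one]
  rw [hcx]
  have h4 : (1 : ℝ) + x ≤ (4 : ℝ) ^ x := by
    have hlog : (1 : ℝ) ≤ Real.log 4 := by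
      rw [Real.le_log_iff_exp_le (by norm_num)]
      have := Real.exp_one_lt_d9
      linarith
    have hexp := Real.add_one_le_exp (Real.log 4 * x)
    rw [Real.rpow_def_of_pos (by norm_num : (0:ℝ) < 4)]
    nlinarith
  have h4pos : (0 : ℝ) < (4 : ℝ) ^ x := Real.rpow_pos_of_pos (by norm_num) x
  have hcx4 : c ^ x ≤ ((4 : ℝ) ^ x)⁻¹ := by
    rw [← Real.inv_rpow (by norm_num : (0:ℝ) ≤ 4)]
    exact Real.rpow_le_rpow hc.le (by linarith) hx0
  have hkcx : k * c ^ x ≤ q := by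
    have hk0 : 0 ≤ k := le_trans hq.le hk
    have h1 : k * c ^ x ≤ k * ((4 : ℝ) ^ x)⁻¹ := mul_le_mul_of_nonneg_left hcx4 hk0
    have h2 : k * ((4 : ℝ) ^ x)⁻¹ ≤ q := by
      rw [hkq]
      have h3 : (1 + x) * ((4 : ℝ) ^ x)⁻¹ ≤ 1 := by
        rw [mul_inv_le_iff₀ h4pos, one_mul]; exact h4
      nlinarith [hq.le]
    linarith
  nlinarith [mul_le_mul_of_nonneg_right hkcx hc.le]

/-- Derivative estimate: for d large, q = 2^d+1, ρ' = (1/((2d)2^d))^{1/(2^d+1)} ρ ≥ R,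
and f of order ≥ q, one has |∂f/∂x_j|_{ρ'} ≤ |f|_ρ. The coefficient of ∂f/∂x_j at
the multi-index l is (l_j + 1)·a(l + 1_j). -/
theorem stmt2 {n : ℕ} (R : ℝ) (hR : 0 < R) :
    ∃ N : ℕ, ∀ d : ℕ, d > N → ∀ ρ ρ' : ℝ, 0 < ρ →
      ρ' = ((1 : ℝ) / ((2 * (d : ℝ)) * 2 ^ d)) ^ ((1 : ℝ) / (2 ^ d + 1)) * ρ →
      R ≤ ρ' →
      ∀ a : (Fin n → ℕ) → ℂ,
        (∀ l : Fin n → ℕ, (∑ i, l i) < 2 ^ d + 1 → a l = 0) →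
        Summable (fun l : Fin n → ℕ => ‖a l‖ * ρ ^ (∑ i, l i)) →
        ∀ j : Fin n,
          ∑' l : Fin n → ℕ,
              ‖((l j : ℂ) + 1) * a (l + fun i => if i = j then 1 else 0)‖ * ρ' ^ (∑ i, l i)
            ≤ ∑' l : Fin n → ℕ, ‖a l‖ * ρ ^ (∑ i, l i) := by
  refine ⟨⌈1/R⌉₊ + 2, ?_⟩
  intro d hd ρ ρ' hρ hρ'eq hRρ' a ha hsum j
  have hd2 : 2 ≤ d := by omega
  have hd0 : (0:ℝ) < d := by exact_mod_cast (by omega : 0 < d)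
  have hdR : 1 / (d : ℝ) ≤ R := by
    have h1 : (1/R : ℝ) ≤ ⌈1/R⌉₊ := Nat.le_ceil _
    have h2 : ((⌈1/R⌉₊ + 2 : ℕ) : ℝ) < d := by exact_mod_cast hd
    have h3 : 1/R < (d:ℝ) := by push_cast at h2; linarith
    rw [div_le_iff₀ hd0] at *
    rw [div_lt_iff₀ hR] at h3
    nlinarith
  -- basic positivity facts
  set c : ℝ := (1 : ℝ) / ((2 * (d : ℝ)) * 2 ^ d) with hc_def
  set qr : ℝ := (2:ℝ) ^ d + 1 with hqr_def
  have h2d1 : (1:ℝ) ≤ 2 ^ d := by exact_mod_cast Nat.one_le_two_pow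
  have hden : (0:ℝ) < (2 * (d : ℝ)) * 2 ^ d := by positivity
  have hc : 0 < c := by rw [hc_def]; positivity
  have hd2' : (2:ℝ) ≤ d := by exact_mod_cast hd2
  have hc4 : c ≤ 1/4 := by
    rw [hc_def]
    rw [div_le_div_iff₀ hden (by norm_num)]
    nlinarith [hd2', h2d1]
  have hqr : 0 < qr := by rw [hqr_def]; linarith
  have hρ' : 0 < ρ' := lt_of_lt_of_le hR hRρ'
  -- the key pointwise estimate
  have key : ∀ s : ℕ, 2 ^ d + 1 ≤ s + 1 → ((s:ℝ) + 1) * ρ' ^ s ≤ ρ ^ (s + 1) := by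
    intro s hs
    have hks : qr ≤ (s:ℝ) + 1 := by
      rw [hqr_def]
      have : ((2^d + 1 : ℕ) : ℝ) ≤ ((s+1 : ℕ) : ℝ) := by exact_mod_cast hs
      push_cast at this; linarith
    have hA : ((s:ℝ)+1) * c ^ (((s:ℝ)+1) / qr) ≤ qr * c := aux_lemA hc hc4 hqr hks
    have hqrc : qr * c ≤ 1 / (d:ℝ) := by
      rw [hqr_def, hc_def, mul_one_div, div_le_div_iff₀ hden hd0]
      nlinarith
    have h1 : ((s:ℝ)+1) * c ^ (((s:ℝ)+1) / qr) ≤ ρ' := le_trans hA (le_trans hqrc (le_trans hdR hRρ'))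
    -- compute ρ'^(s+1)
    have hpow : ρ' ^ (s+1) = c ^ (((s:ℝ)+1) / qr) * ρ ^ (s+1) := by
      rw [hρ'eq, mul_pow]
      congr 1
      rw [← Real.rpow_natCast (c ^ ((1:ℝ)/qr)) (s+1), ← Real.rpow_mul hc.le]
      congr 1
      push_cast
      field_simp
    have hmul : ((s:ℝ)+1) * ρ' ^ s * ρ' ≤ ρ ^ (s+1) * ρ' := by
      calc ((s:ℝ)+1) * ρ' ^ s * ρ' = ((s:ℝ)+1) * ρ' ^ (s+1) := by ring
        _ = ((s:ℝ)+1) * c ^ (((s:ℝ)+1) / qr) * ρ ^ (s+1) := by rw [hpow]; ring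
        _ ≤ ρ' * ρ ^ (s+1) := mul_le_mul_of_nonneg_right h1 (by positivity)
        _ = ρ ^ (s+1) * ρ' := by ring
    exact le_of_mul_le_mul_right hmul hρ'
  -- set up the comparison of sums
  set e : Fin n → ℕ := fun i => if i = j then 1 else 0 with he
  have hsume : ∀ l : Fin n → ℕ, (∑ i, (l + e) i) = (∑ i, l i) + 1 := by
    intro l
    have : (∑ i, (l + e) i) = (∑ i, l i) + (∑ i, e i) := by
      simp [Finset.sum_add_distrib]
    rw [this, he]
    simp
  have hinj : Function.Injective (fun l : Fin n → ℕ => l + e) := add_left_injective e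
  set F : (Fin n → ℕ) → ℝ := fun l => ‖a l‖ * ρ ^ (∑ i, l i) with hF
  set G : (Fin n → ℕ) → ℝ :=
    fun l => ‖((l j : ℂ) + 1) * a (l + e)‖ * ρ' ^ (∑ i, l i) with hG
  have hGnn : ∀ l, 0 ≤ G l := by intro l; rw [hG]; positivity
  have hle : ∀ l, G l ≤ F (l + e) := by
    intro l
    have hnorm : ‖((l j : ℂ) + 1) * a (l + e)‖ = ((l j : ℝ) + 1) * ‖a (l + e)‖ := by
      rw [norm_mul]
      congr 1
      have h1 : ((l j : ℂ) + 1) = ((l j + 1 : ℕ) : ℂ) := by push_cast; ring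
      rw [h1, Complex.norm_natCast]
      push_cast; ring
    rw [hG, hF]
    simp only [hsume l, hnorm]
    by_cases hz : a (l + e) = 0
    · simp [hz]
    · have horder : 2 ^ d + 1 ≤ (∑ i, l i) + 1 := by
        by_contra hcon
        exact hz (ha _ (by rw [hsume l]; omega))
      have hlj : (l j : ℝ) + 1 ≤ (∑ i, l i : ℕ) + 1 := by
        have : l j ≤ ∑ i, l i :=
          Finset.single_le_sum (fun i _ => Nat.zero_le (l i)) (Finset.mem_univ j)
        exact_mod_cast Nat.succ_le_succ this
      have hkey := key (∑ i, l i) horder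
      calc ((l j : ℝ) + 1) * ‖a (l + e)‖ * ρ' ^ (∑ i, l i)
          ≤ (((∑ i, l i : ℕ) : ℝ) + 1) * ‖a (l + e)‖ * ρ' ^ (∑ i, l i) := by
            apply mul_le_mul_of_nonneg_right _ (by positivity)
            exact mul_le_mul_of_nonneg_right hlj (norm_nonneg _)
        _ = ‖a (l + e)‖ * ((((∑ i, l i : ℕ) : ℝ) + 1) * ρ' ^ (∑ i, l i)) := by ring
        _ ≤ ‖a (l + e)‖ * ρ ^ ((∑ i, l i) + 1) :=
            mul_le_mul_of_nonneg_left hkey (norm_nonneg _)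
  have hFcomp : Summable (fun l : Fin n → ℕ => F (l + e)) :=
    hsum.comp_injective hinj
  have hGsum : Summable G := Summable.of_nonneg_of_le hGnn hle hFcomp
  exact Summable.tsum_le_tsum_of_inj (fun l => l + e) hinj
    (fun m _ => by rw [hF]; positivity) hle hGsum hsum
end

section
/- Let a^{(1)},…,a^{(r)} ∈ ℝ^N and suppose b = Σ_k β_k a^{(k)} is a linear combination of a^{(1)},…,a^{(r)}. Let Y_b and Z_k be the diagonal linear vector fields on K^N with diagonal coefficients b and a^{(k)} respectively. Then for any multivector field Λ with monomial expansion, [Z_k, Λ] = 0 for all k = 1,…,r implies [Y_b, Λ] = 0. Conversely, if {a^{(1)},…,a^{(r)}} is a basis of {a : ⟨a,u⟩ = 0 ∀ u ∈ 𝓡}, where 𝓡 = {u ∈ ℤ^N : ⟨b',u⟩ = 0} for the eigenvalue vector b' of Y_b on monomial tensors, then [Y_b, Λ] = 0 implies [Z_k, Λ] = 0 for all k. -/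
/-- Commuting with the torus generators vs commuting with the semisimple part, at the
level of monomial weight expansions: a (multi)vector with weight coefficients c
commutes with a diagonal field of eigenvalue vector y iff ⟨y,w⟩ = 0 for every
weight w with c w ≠ 0. If b = Σ β_k a^{(k)}, then commuting with every a^{(k)}
implies commuting with b; conversely, if {a^{(k)}} is a basis of the real span of
the orthogonal of the resonance lattice 𝓡 = {u ∈ ℤ^N : ⟨b,u⟩ = 0}, then commuting
with b implies commuting with each a^{(k)}. -/
theorem stmt19 {Nn r : ℕ} (a : Fin r → (Fin Nn → ℝ)) (β : Fin r → ℝ)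
    (b : Fin Nn → ℝ) (hb : ∀ i, b i = ∑ k, β k * a k i)
    (c : (Fin Nn → ℤ) → ℂ) :
    ((∀ k, ∀ w : Fin Nn → ℤ, c w ≠ 0 → (∑ i, a k i * (w i : ℝ)) = 0) →
      ∀ w : Fin Nn → ℤ, c w ≠ 0 → (∑ i, b i * (w i : ℝ)) = 0) ∧
    ((LinearIndependent ℝ a ∧
        (Submodule.span ℝ (Set.range a) : Set (Fin Nn → ℝ)) =
          {x | ∀ u : Fin Nn → ℤ, (∑ i, b i * (u i : ℝ)) = 0 →
            (∑ i, x i * (u i : ℝ)) = 0}) →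
      (∀ w : Fin Nn → ℤ, c w ≠ 0 → (∑ i, b i * (w i : ℝ)) = 0) →
      ∀ k, ∀ w : Fin Nn → ℤ, c w ≠ 0 → (∑ i, a k i * (w i : ℝ)) = 0) := by
  constructor
  · intro h w hw
    have : (∑ i, b i * (w i : ℝ)) = ∑ k, β k * ∑ i, a k i * (w i : ℝ) := by
      simp only [hb, Finset.sum_mul, Finset.mul_sum]
      rw [Finset.sum_comm]
      exact Finset.sum_congr rfl fun k _ => Finset.sum_congr rfl fun i _ => by ring
    rw [this]
    exact Finset.sum_eq_zero fun k _ => by rw [h k w hw, mul_zero]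
  · rintro ⟨-, hspan⟩ hcomm k w hw
    have hk : a k ∈ (Submodule.span ℝ (Set.range a) : Set (Fin Nn → ℝ)) :=
      Submodule.subset_span ⟨k, rfl⟩
    rw [hspan] at hk
    exact hk w (hcomm w hw)
end
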